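/- arXiv:2010.07905 — 3 statements merged into one kernel-verified Lean document; each statement's English description precedes it below -/
import Mathlib

section
/- For every integer d ≥ 2, the optimal value of the linear program: maximize p₁ over nonnegative reals p₁, p₂, p₃, p₄ subject to (1/(d−1))·(p₂ + p₄/(d+1)) ≥ p₁ + p₃/(d+1), (1/(d−1))·(p₃ + p₄/(d+1)) ≥ p₁ + p₂/(d+1), p₁ + p₄/(d−1)² ≥ (p₂ + p₃)/(d−1), and p₁ + p₂ + p₃ + p₄ = 1, equals 1/d²; that is, every feasible point satisfies p₁ ≤ 1/d², and the value 1/d² is attained, e.g., at p₁ = 1/d², p₂ = p₃ = 0, p₄ = 1 − 1/d². -/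
/-! Clearing denominators, the first two constraints read
`(d² - 1) p₁ + (d - 1) p₃ ≤ (d + 1) p₂ + p₄` and the same with `p₂, p₃` swapped.
Their sum is `(d² - 1) p₁ ≤ p₂ + p₃ + p₄ = 1 - p₁`, i.e. `p₁ ≤ 1/d²`.
At `p₁ = 1/d², p₂ = p₃ = 0` both of them hold with equality. -/

namespace SwapLP

variable {D : ℝ}

lemma clear_denominators (hD : 1 < D) {a b c e : ℝ}
    (h : a + c / (D + 1) ≤ (1 / (D - 1)) * (b + e / (D + 1))) :
    (D ^ 2 - 1) * a + (D - 1) * c ≤ (D + 1) * b + e := by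
  have hm : 0 < D - 1 := by linarith
  have hp : 0 < D + 1 := by linarith
  calc (D ^ 2 - 1) * a + (D - 1) * c = (D - 1) * (D + 1) * (a + c / (D + 1)) := by
        field_simp
        ring
    _ ≤ (D - 1) * (D + 1) * ((1 / (D - 1)) * (b + e / (D + 1))) :=
        mul_le_mul_of_nonneg_left h (mul_pos hm hp).le
    _ = (D + 1) * b + e := by field_simp

lemma le_one_div_sq (hD : 1 < D) {p₁ p₂ p₃ p₄ : ℝ}
    (h₂ : p₁ + p₃ / (D + 1) ≤ (1 / (D - 1)) * (p₂ + p₄ / (D + 1)))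
    (h₃ : p₁ + p₂ / (D + 1) ≤ (1 / (D - 1)) * (p₃ + p₄ / (D + 1)))
    (hsum : p₁ + p₂ + p₃ + p₄ = 1) :
    p₁ ≤ 1 / D ^ 2 := by
  have hA := clear_denominators hD h₂
  have hB := clear_denominators hD h₃
  rw [le_div_iff₀ (by positivity)]
  linarith

theorem isGreatest (hD : 1 < D) :
    IsGreatest {p₁ : ℝ | ∃ p₂ p₃ p₄ : ℝ, 0 ≤ p₁ ∧ 0 ≤ p₂ ∧ 0 ≤ p₃ ∧ 0 ≤ p₄ ∧
        p₁ + p₃ / (D + 1) ≤ (1 / (D - 1)) * (p₂ + p₄ / (D + 1)) ∧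
        p₁ + p₂ / (D + 1) ≤ (1 / (D - 1)) * (p₃ + p₄ / (D + 1)) ∧
        (p₂ + p₃) / (D - 1) ≤ p₁ + p₄ / (D - 1) ^ 2 ∧
        p₁ + p₂ + p₃ + p₄ = 1}
      (1 / D ^ 2) := by
  have hm : 0 < D - 1 := by linarith
  have hp₄ : 0 ≤ 1 - 1 / D ^ 2 := by
    rw [sub_nonneg, div_le_one (by positivity)]
    nlinarith
  have tight : 1 / D ^ 2 + 0 / (D + 1) = 1 / (D - 1) * (0 + (1 - 1 / D ^ 2) / (D + 1)) := by
    field_simp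
    ring
  refine ⟨⟨0, 0, 1 - 1 / D ^ 2, by positivity, le_rfl, le_rfl, hp₄, tight.le, tight.le,
    ?_, by ring⟩, ?_⟩
  · rw [add_zero, zero_div]
    exact add_nonneg (by positivity) (div_nonneg hp₄ (sq_nonneg _))
  · rintro p₁ ⟨p₂, p₃, p₄, -, -, -, -, h₂, h₃, -, hsum⟩
    exact le_one_div_sq hD h₂ h₃ hsum

end SwapLP

/-- the linear program arising from PPT simulation of the `d`-dimensional
swap channel with no resource state has optimal value `1/d²`: every feasible point
satisfies `p₁ ≤ 1/d²`, and this value is attained (e.g. at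
`p₁ = 1/d², p₂ = p₃ = 0, p₄ = 1 − 1/d²`). -/
theorem stmt0 (d : ℤ) (hd : 2 ≤ d) :
    IsGreatest {p₁ : ℝ | ∃ p₂ p₃ p₄ : ℝ, 0 ≤ p₁ ∧ 0 ≤ p₂ ∧ 0 ≤ p₃ ∧ 0 ≤ p₄ ∧
        p₁ + p₃ / ((d : ℝ) + 1) ≤ (1 / ((d : ℝ) - 1)) * (p₂ + p₄ / ((d : ℝ) + 1)) ∧
        p₁ + p₂ / ((d : ℝ) + 1) ≤ (1 / ((d : ℝ) - 1)) * (p₃ + p₄ / ((d : ℝ) + 1)) ∧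
        (p₂ + p₃) / ((d : ℝ) - 1) ≤ p₁ + p₄ / ((d : ℝ) - 1) ^ 2 ∧
        p₁ + p₂ + p₃ + p₄ = 1}
      (1 / (d : ℝ) ^ 2) :=
  SwapLP.isGreatest (by exact_mod_cast hd)
end

section
/- Let L be a quantum channel from M_n⊗M_k to M_m, and let ρ and σ be density matrices in M_k. Define the channels L_ρ, L_σ from M_n to M_m by L_ρ(ω) := L(ω⊗ρ) and L_σ(ω) := L(ω⊗σ). Then the normalized diamond distance satisfies (1/2)‖L_ρ − L_σ‖⋄ ≤ (1/2)‖ρ − σ‖₁. -/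
open Matrix Kronecker
open scoped ComplexOrder

noncomputable section

/-- The old Mathlib `Matrix.PosSemidef.sqrt` (removed), spelled out with its old definition. -/
def psdSqrt {n : Type*} [Fintype n] [DecidableEq n] {A : Matrix n n ℂ} (hA : A.PosSemidef) :
    Matrix n n ℂ :=
  (hA.1.eigenvectorUnitary : Matrix n n ℂ) * diagonal ((↑) ∘ (√·) ∘ hA.1.eigenvalues) *
    (star hA.1.eigenvectorUnitary : Matrix n n ℂ)

/-- The trace norm `‖X‖₁ = Tr[√(X†X)]`. -/
def traceNorm {n : Type*} [Fintype n] [DecidableEq n] (X : Matrix n n ℂ) : ℝ :=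
  ((psdSqrt (Matrix.posSemidef_conjTranspose_mul_self X)).trace).re

/-- The extension `id_k ⊗ Φ` of a map on matrices, with the identity on the first factor. -/
def idTensor {k n m : Type*} (Φ : Matrix n n ℂ → Matrix m m ℂ)
    (M : Matrix (k × n) (k × n) ℂ) : Matrix (k × m) (k × m) ℂ :=
  Matrix.of fun p q => Φ (Matrix.of fun a b => M (p.1, a) (q.1, b)) p.2 q.2

/-- A density matrix: positive semidefinite with unit trace. -/
def IsState {n : Type*} [Fintype n] (ρ : Matrix n n ℂ) : Prop :=
  ρ.PosSemidef ∧ ρ.trace = 1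

/-- Normalized diamond distance between two maps on matrices, as the supremum over
bipartite input states (with a reference system of the same dimension as the input)
of the normalized trace distance of the outputs. -/
def dDist {n m : Type*} [Fintype n] [DecidableEq n] [Fintype m] [DecidableEq m]
    (N M : Matrix n n ℂ → Matrix m m ℂ) : ℝ :=
  sSup {x : ℝ | ∃ ρ : Matrix (n × n) (n × n) ℂ, IsState ρ ∧
    x = (1 / 2) * traceNorm (idTensor N ρ - idTensor M ρ)}

/-- Complete positivity of a linear map on matrices: every finite identity extension
preserves positive semidefiniteness. -/
def IsCP {n m : Type*} [Fintype n] [DecidableEq n] [Fintype m] [DecidableEq m]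
    (Φ : Matrix n n ℂ →ₗ[ℂ] Matrix m m ℂ) : Prop :=
  ∀ (r : ℕ) (M : Matrix (Fin r × n) (Fin r × n) ℂ), M.PosSemidef →
    (idTensor (fun X => Φ X) M).PosSemidef

/-- Trace preservation of a linear map on matrices. -/
def IsTP {n m : Type*} [Fintype n] [Fintype m]
    (Φ : Matrix n n ℂ →ₗ[ℂ] Matrix m m ℂ) : Prop :=
  ∀ X, (Φ X).trace = X.trace

/-- Choi operator of a map on matrices: `Γ^Φ = Σ_{i,j} |i⟩⟨j| ⊗ Φ(|i⟩⟨j|)`. -/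
def choi {n m : Type*} [DecidableEq n]
    (Φ : Matrix n n ℂ → Matrix m m ℂ) : Matrix (n × m) (n × m) ℂ :=
  Matrix.of fun p q => Φ (Matrix.single p.1 q.1 1) p.2 q.2

/-- The swap operator `F = Σ_{i,j} |i⟩⟨j| ⊗ |j⟩⟨i|` on `ℂ^d ⊗ ℂ^d`. -/
def swapOp (d : ℕ) : Matrix (Fin d × Fin d) (Fin d × Fin d) ℂ :=
  Matrix.of fun p q => if p.1 = q.2 ∧ p.2 = q.1 then 1 else 0

/-- The swap channel `S^d(X) = F X F†`. -/
def swapCh (d : ℕ) (X : Matrix (Fin d × Fin d) (Fin d × Fin d) ℂ) :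
    Matrix (Fin d × Fin d) (Fin d × Fin d) ℂ :=
  swapOp d * X * (swapOp d)ᴴ

/-- Square root of a positive semidefinite matrix (junk value `0` otherwise). -/
def msqrt {n : Type*} [Fintype n] [DecidableEq n] (X : Matrix n n ℂ) : Matrix n n ℂ :=
  letI := Classical.propDecidable X.PosSemidef
  if h : X.PosSemidef then psdSqrt h else 0

/-- Fidelity `F(ω,τ) = ‖√ω √τ‖₁²`. -/
def fid {n : Type*} [Fintype n] [DecidableEq n] (ω τ : Matrix n n ℂ) : ℝ :=
  (traceNorm (msqrt ω * msqrt τ)) ^ 2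

/-- Channel fidelity: the infimum of output fidelities over bipartite input states. -/
def cFid {n m : Type*} [Fintype n] [DecidableEq n] [Fintype m] [DecidableEq m]
    (N M : Matrix n n ℂ → Matrix m m ℂ) : ℝ :=
  sInf {x : ℝ | ∃ ρ : Matrix (n × n) (n × n) ℂ, IsState ρ ∧
    x = fid (idTensor N ρ) (idTensor M ρ)}

/-- Partial trace over the second (right) factor. -/
def ptrR {a b : Type*} [Fintype b] (X : Matrix (a × b) (a × b) ℂ) : Matrix a a ℂ :=
  Matrix.of fun i j => ∑ k, X (i, k) (j, k)

/-- Unnormalized maximally entangled operator `Γ = |Γ⟩⟨Γ|` on `ℂ^D ⊗ ℂ^D`. -/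
def gamOp (D : ℕ) : Matrix (Fin D × Fin D) (Fin D × Fin D) ℂ :=
  Matrix.of fun p q => if p.1 = p.2 ∧ q.1 = q.2 then 1 else 0

/-- Maximally entangled state `Φ = Γ/D` on `ℂ^D ⊗ ℂ^D`. -/
def phiD (D : ℕ) : Matrix (Fin D × Fin D) (Fin D × Fin D) ℂ :=
  ((D : ℂ))⁻¹ • gamOp D

/-- Partial transpose over Bob's factors `B, B̂, B'` of a matrix on the six factors
`(A ⊗ B) ⊗ (Â ⊗ B̂) ⊗ (A' ⊗ B')`. -/
def ptB6 {A B AH BH A' B' : Type*}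
    (X : Matrix (((A × B) × (AH × BH)) × (A' × B')) (((A × B) × (AH × BH)) × (A' × B')) ℂ) :
    Matrix (((A × B) × (AH × BH)) × (A' × B')) (((A × B) × (AH × BH)) × (A' × B')) ℂ :=
  Matrix.of fun p q =>
    X (((p.1.1.1, q.1.1.2), (p.1.2.1, q.1.2.2)), (p.2.1, q.2.2))
      (((q.1.1.1, p.1.1.2), (q.1.2.1, p.1.2.2)), (q.2.1, p.2.2))

/-- Partial transpose over the factor `B̂` of a matrix on `Â ⊗ B̂`. -/
def ptBh2 {AH BH : Type*} (X : Matrix (AH × BH) (AH × BH) ℂ) : Matrix (AH × BH) (AH × BH) ℂ :=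
  Matrix.of fun g g' => X (g.1, g'.2) (g'.1, g.2)

/-- Contraction `Tr_{ÂB̂}[(T_{ÂB̂}(ρ) ⊗ I) P]` of a six-factor operator with a resource state,
yielding the Choi operator of the induced channel `ω ↦ P(ω ⊗ ρ)`. -/
def contractRes {A B AH BH A' B' : Type*} [Fintype AH] [Fintype BH]
    (ρ : Matrix (AH × BH) (AH × BH) ℂ)
    (P : Matrix (((A × B) × (AH × BH)) × (A' × B')) (((A × B) × (AH × BH)) × (A' × B')) ℂ) :
    Matrix ((A × B) × (A' × B')) ((A × B) × (A' × B')) ℂ :=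
  Matrix.of fun p q => ∑ h, ∑ h', ρ h h' * P ((p.1, h), p.2) ((q.1, h'), q.2)

/-!
Write `ρ - σ = Δ₊ - Δ₋` with `Δ₊, Δ₋ ⪰ 0` its positive and negative parts, so that
`Tr Δ₊ + Tr Δ₋ = ‖ρ - σ‖₁`. For a fixed input state `μ`, the map `Δ ↦ (id ⊗ L(· ⊗ Δ))(μ)` is
linear, positive (by complete positivity of `L`) and trace preserving, so it sends `ρ - σ` to a
difference `A - B` of positive semidefinite matrices with `Tr A + Tr B = ‖ρ - σ‖₁`.
Finally `‖A - B‖₁ ≤ Tr A + Tr B`: with `S = sign (A - B)` one has `|A - B| = S (A - B)`, and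
`-1 ≤ S ≤ 1` gives `Tr (S A) ≤ Tr A` and `-Tr (S B) ≤ Tr B`.
-/

section TraceNorm

open scoped MatrixOrder

variable {d : Type*} [Fintype d] [DecidableEq d]

lemma psdSqrt_eq_sqrt {A : Matrix d d ℂ} (hA : A.PosSemidef) : psdSqrt hA = CFC.sqrt A := by
  rw [CFC.sqrt_eq_real_sqrt A hA.nonneg, cfcₙ_eq_cfc, hA.1.cfc_eq, IsHermitian.cfc,
    Unitary.conjStarAlgAut_apply]
  rfl

lemma traceNorm_eq_re_trace_abs (X : Matrix d d ℂ) : traceNorm X = (CFC.abs X).trace.re := by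
  rw [traceNorm, psdSqrt_eq_sqrt]
  rfl

lemma traceNorm_nonneg (X : Matrix d d ℂ) : 0 ≤ traceNorm X := by
  rw [traceNorm_eq_re_trace_abs]
  exact Complex.nonneg_iff.mp (CFC.abs_nonneg X).posSemidef.trace_nonneg |>.1

lemma Matrix.PosSemidef.trace_mul_nonneg {A B : Matrix d d ℂ} (hA : A.PosSemidef)
    (hB : B.PosSemidef) : 0 ≤ (A * B).trace := by
  have hsq : CFC.sqrt A * CFC.sqrt A = A := CFC.sqrt_mul_sqrt_self A hA.nonneg
  have hsa : (CFC.sqrt A)ᴴ = CFC.sqrt A := (CFC.sqrt_nonneg A).posSemidef.1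
  rw [← hsq, mul_assoc, trace_mul_comm, mul_assoc]
  simpa [hsa, mul_assoc] using (hB.mul_mul_conjTranspose_same (CFC.sqrt A)).trace_nonneg

lemma Matrix.IsHermitian.abs_eq_cfc_sign_mul {H : Matrix d d ℂ} (hH : H.IsHermitian) :
    CFC.abs H = cfc (fun x : ℝ => (SignType.sign x : ℝ)) H * H := by
  have hcont (f : ℝ → ℝ) : ContinuousOn f (spectrum ℝ H) := H.finite_real_spectrum.continuousOn f
  rw [CFC.abs_eq_cfc_norm H hH.isSelfAdjoint]
  nth_rw 3 [← cfc_id' ℝ H hH.isSelfAdjoint]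
  rw [← cfc_mul _ _ H (hcont _) (hcont _)]
  exact cfc_congr fun x _ => (sign_mul_self x).symm

lemma traceNorm_sub_le {A B : Matrix d d ℂ} (hA : A.PosSemidef) (hB : B.PosSemidef) :
    traceNorm (A - B) ≤ (A.trace + B.trace).re := by
  have hH : (A - B).IsHermitian := hA.1.sub hB.1
  set S := cfc (fun x : ℝ => (SignType.sign x : ℝ)) (A - B)
  have hcont (f : ℝ → ℝ) : ContinuousOn f (spectrum ℝ (A - B)) :=
    (A - B).finite_real_spectrum.continuousOn f
  have hS_le_one : (1 - S).PosSemidef := by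
    rw [← cfc_const_one ℝ (A - B) hH.isSelfAdjoint, ← cfc_sub _ _ _ (hcont _) (hcont _)]
    refine (cfc_nonneg fun x _ => ?_).posSemidef
    rcases lt_trichotomy x 0 with h | h | h <;> simp [h, sign_neg, sign_pos]
  have hS_ge_neg_one : (1 + S).PosSemidef := by
    rw [← cfc_const_one ℝ (A - B) hH.isSelfAdjoint, ← cfc_add _ _ _ (hcont _) (hcont _)]
    refine (cfc_nonneg fun x _ => ?_).posSemidef
    rcases lt_trichotomy x 0 with h | h | h <;> simp [h, sign_neg, sign_pos]
  have hSA : 0 ≤ ((1 - S) * A).trace.re :=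
    (Complex.nonneg_iff.mp (hS_le_one.trace_mul_nonneg hA)).1
  have hSB : 0 ≤ ((1 + S) * B).trace.re :=
    (Complex.nonneg_iff.mp (hS_ge_neg_one.trace_mul_nonneg hB)).1
  rw [sub_mul, one_mul, trace_sub, Complex.sub_re] at hSA
  rw [add_mul, one_mul, trace_add, Complex.add_re] at hSB
  rw [traceNorm_eq_re_trace_abs, hH.abs_eq_cfc_sign_mul, mul_sub, trace_sub, Complex.sub_re,
    Complex.add_re]
  linarith

lemma traceNorm_map_le {d' : Type*} [Fintype d'] [DecidableEq d']
    (T : Matrix d d ℂ →ₗ[ℂ] Matrix d' d' ℂ) (hpos : ∀ X, X.PosSemidef → (T X).PosSemidef)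
    (htr : ∀ X, (T X).trace = X.trace) {H : Matrix d d ℂ} (hH : H.IsHermitian) :
    traceNorm (T H) ≤ traceNorm H :=
  calc traceNorm (T H) = traceNorm (T H⁺ - T H⁻) := by
        rw [← map_sub, CFC.posPart_sub_negPart H hH.isSelfAdjoint]
    _ ≤ ((T H⁺).trace + (T H⁻).trace).re :=
        traceNorm_sub_le (hpos _ (CFC.posPart_nonneg H).posSemidef)
          (hpos _ (CFC.negPart_nonneg H).posSemidef)
    _ = traceNorm H := by
        rw [htr, htr, ← trace_add, CFC.posPart_add_negPart H hH.isSelfAdjoint,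
          traceNorm_eq_re_trace_abs]

end TraceNorm

lemma IsCP.posSemidef_idTensor {r n m : Type*} [Fintype r] [Fintype n] [DecidableEq n]
    [Fintype m] [DecidableEq m] {Φ : Matrix n n ℂ →ₗ[ℂ] Matrix m m ℂ} (hΦ : IsCP Φ)
    {M : Matrix (r × n) (r × n) ℂ} (hM : M.PosSemidef) :
    (idTensor (fun X => Φ X) M).PosSemidef := by
  let e : r × n ≃ Fin (Fintype.card r) × n := (Fintype.equivFin r).prodCongr (Equiv.refl n)
  let e' : r × m ≃ Fin (Fintype.card r) × m := (Fintype.equivFin r).prodCongr (Equiv.refl m)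
  have h : idTensor (fun X => Φ X) M
      = (idTensor (fun X => Φ X) (M.submatrix e.symm e.symm)).submatrix e' e' := by
    ext p q
    simp [idTensor, e, e']
  rw [h]
  exact (hΦ _ _ (hM.submatrix _)).submatrix _

lemma IsTP.trace_idTensor {r n m : Type*} [Fintype r] [Fintype n] [Fintype m]
    {Φ : Matrix n n ℂ →ₗ[ℂ] Matrix m m ℂ} (hΦ : IsTP Φ) (M : Matrix (r × n) (r × n) ℂ) :
    (idTensor (fun X => Φ X) M).trace = M.trace := by
  simp only [trace, diag, Fintype.sum_prod_type, idTensor, of_apply]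
  exact Finset.sum_congr rfl fun i _ => hΦ (of fun a b => M (i, a) (i, b))

section idTensorKronRight

variable {r n k m : Type*} (L : Matrix (n × k) (n × k) ℂ →ₗ[ℂ] Matrix m m ℂ)
  (M : Matrix (r × n) (r × n) ℂ)

def idTensorKronRight : Matrix k k ℂ →ₗ[ℂ] Matrix (r × m) (r × m) ℂ where
  toFun Δ := idTensor (fun ω => L (ω ⊗ₖ Δ)) M
  map_add' Δ Δ' := by ext; simp [idTensor, kronecker_add]
  map_smul' c Δ := by ext; simp [idTensor, kronecker_smul]

lemma idTensorKronRight_apply (Δ : Matrix k k ℂ) :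
    idTensorKronRight L M Δ = idTensor (fun X => L X)
      ((M ⊗ₖ Δ).submatrix (Equiv.prodAssoc r n k).symm (Equiv.prodAssoc r n k).symm) :=
  rfl

variable {L M}

lemma posSemidef_idTensorKronRight [Fintype r] [Fintype n] [DecidableEq n]
    [Fintype k] [DecidableEq k] [Fintype m] [DecidableEq m] (hL : IsCP L) (hM : M.PosSemidef)
    {Δ : Matrix k k ℂ} (hΔ : Δ.PosSemidef) : (idTensorKronRight L M Δ).PosSemidef := by
  rw [idTensorKronRight_apply]
  exact hL.posSemidef_idTensor ((hM.kronecker hΔ).submatrix _)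

lemma trace_idTensorKronRight [Fintype r] [Fintype n] [Fintype k] [Fintype m] (hL : IsTP L)
    (Δ : Matrix k k ℂ) : (idTensorKronRight L M Δ).trace = M.trace * Δ.trace := by
  rw [idTensorKronRight_apply, hL.trace_idTensor, ← trace_kronecker]
  exact Fintype.sum_equiv (Equiv.prodAssoc r n k).symm _ _ fun _ => rfl

end idTensorKronRight

/-- feeding two different resource states into the same channel produces
channels whose normalized diamond distance is at most the normalized trace distance
of the resource states. -/
theorem stmt2 {n k m : Type*} [Fintype n] [DecidableEq n] [Fintype k] [DecidableEq k]
    [Fintype m] [DecidableEq m]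
    (L : Matrix (n × k) (n × k) ℂ →ₗ[ℂ] Matrix m m ℂ) (hCP : IsCP L) (hTP : IsTP L)
    (ρ σ : Matrix k k ℂ) (hρ : IsState ρ) (hσ : IsState σ) :
    dDist (fun ω => L (ω ⊗ₖ ρ)) (fun ω => L (ω ⊗ₖ σ)) ≤ (1 / 2) * traceNorm (ρ - σ) := by
  refine Real.sSup_le ?_ (mul_nonneg (by norm_num) (traceNorm_nonneg _))
  rintro _ ⟨μ, hμ, rfl⟩
  have hcontract := traceNorm_map_le (idTensorKronRight L μ)
    (fun _ => posSemidef_idTensorKronRight hCP hμ.1)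
    (fun Δ => by rw [trace_idTensorKronRight hTP, hμ.2, one_mul]) (hρ.1.1.sub hσ.1.1)
  rw [map_sub] at hcontract
  exact mul_le_mul_of_nonneg_left hcontract (by norm_num)
end
end

section
/- For all p₁, p₂ ∈ [0,1], (1/16)·(1 + 3(p₁+p₂) − 6p₁p₂) ≤ 1/4, and equality holds if and only if (p₁,p₂) = (1,0) or (p₁,p₂) = (0,1). Consequently, the fidelity of the KPF16 bidirectional-teleportation protocol to the ideal swap channel never exceeds 1/4, and this maximum corresponds to unidirectional teleportation in one direction combined with a replacer channel in the other. -/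
/-- the KPF16 fidelity `(1/16)(1 + 3(p₁+p₂) − 6p₁p₂)` is at most `1/4` on
`[0,1]²`, with equality exactly at `(p₁,p₂) = (1,0)` and `(p₁,p₂) = (0,1)`. -/
theorem stmt15 (p₁ p₂ : ℝ) (h1 : p₁ ∈ Set.Icc (0 : ℝ) 1) (h2 : p₂ ∈ Set.Icc (0 : ℝ) 1) :
    (1 / 16) * (1 + 3 * (p₁ + p₂) - 6 * p₁ * p₂) ≤ 1 / 4 ∧
    ((1 / 16) * (1 + 3 * (p₁ + p₂) - 6 * p₁ * p₂) = 1 / 4 ↔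
      (p₁ = 1 ∧ p₂ = 0) ∨ (p₁ = 0 ∧ p₂ = 1)) := by
  obtain ⟨a1, b1⟩ := h1
  obtain ⟨a2, b2⟩ := h2
  constructor
  · nlinarith [mul_nonneg a1 a2, mul_nonneg (sub_nonneg.2 b1) (sub_nonneg.2 b2)]
  · constructor
    · intro h
      have h3 : p₁ * p₂ = 0 := by
        nlinarith [mul_nonneg a1 a2, mul_nonneg (sub_nonneg.2 b1) (sub_nonneg.2 b2)]
      have h4 : (1 - p₁) * (1 - p₂) = 0 := by
        nlinarith [mul_nonneg a1 a2]
      rcases mul_eq_zero.1 h3 with hp | hp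
      · right; constructor
        · exact hp
        · rcases mul_eq_zero.1 h4 with hq | hq
          · nlinarith
          · linarith
      · left; constructor
        · rcases mul_eq_zero.1 h4 with hq | hq
          · linarith
          · nlinarith
        · exact hp
    · rintro (⟨e1, e2⟩ | ⟨e1, e2⟩) <;> subst e1 <;> subst e2 <;> ring
end
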